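/- arXiv:2210.07556 — 5 statements merged into one kernel-verified Lean document; each statement's English description precedes it below -/
import Mathlib

section
/- The function r ↦ [−r]^+ + max_{|S|=k} H(r,S), where H(r,S) = r + ∑_{i∈S} E[(X_i - r)^+], has no negative minimizer: for every ρ < 0, [−ρ]^+ + max_{|S|=k} H(ρ,S) > max_{|S|=k} H(0,S). Consequently min_{ρ∈ℝ}([−ρ]^+ + max_{|S|=k} H(ρ,S)) = min_{ρ∈ℝ} max_{|S|=k} H(ρ,S). -/
/-!
For `r ≤ 0` every `X i - r` is nonnegative, so `E[(X i - r)⁺] = E[X i] - r` and each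
`H(r, S)` with `|S| = k` equals `H(0, S) + (1 - k) r`. Hence on `r ≤ 0` the maximum
`max_{|S| = k} H(r, S)` is `max_{|S| = k} H(0, S)` plus the nonnegative term `(1 - k) r`,
and adding `[-r]⁺ = -r > 0` makes the value strictly larger than at `r = 0`. On `r ≥ 0` the
penalty vanishes, so both objectives have the same infimum.
-/

open MeasureTheory Finset

theorem ciInf_max_neg_zero_add_eq {f : ℝ → ℝ} (hneg : ∀ ρ < 0, f 0 ≤ f ρ)
    (hbdd : BddBelow (f '' Set.Ici 0)) :
    ⨅ ρ, (max (-ρ) 0 + f ρ) = ⨅ ρ, f ρ := by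
  have hf : BddBelow (Set.range f) := by
    obtain ⟨b, hb⟩ := hbdd
    refine ⟨b, ?_⟩
    rintro _ ⟨ρ, rfl⟩
    rcases le_or_gt 0 ρ with hρ | hρ
    · exact hb ⟨ρ, hρ, rfl⟩
    · exact (hb ⟨0, Set.self_mem_Ici, rfl⟩).trans (hneg ρ hρ)
  have hle : ∀ ρ, f ρ ≤ max (-ρ) 0 + f ρ := fun ρ => le_add_of_nonneg_left (le_max_right _ _)
  refine le_antisymm (le_ciInf fun ρ => ?_) (ciInf_mono hf hle)
  have hg := hf.range_mono _ hle
  rcases le_or_gt 0 ρ with hρ | hρ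
  · simpa [hρ] using ciInf_le hg ρ
  · exact (ciInf_le hg 0).trans (by simpa using hneg ρ hρ)

section PositivePart

variable {Ω ι : Type*} [MeasurableSpace Ω] {μ : Measure Ω}

theorem integral_max_sub_zero_of_nonpos [IsProbabilityMeasure μ] {Y : Ω → ℝ}
    (hY : Integrable Y μ) (hY0 : 0 ≤ᵐ[μ] Y) {r : ℝ} (hr : r ≤ 0) :
    ∫ ω, max (Y ω - r) 0 ∂μ = ∫ ω, Y ω ∂μ - r := by
  have hpos : (fun ω => max (Y ω - r) 0) =ᵐ[μ] fun ω => Y ω - r :=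
    hY0.mono fun ω hω => max_eq_left (sub_nonneg.2 (hr.trans hω))
  rw [integral_congr_ae hpos, integral_sub hY (integrable_const r), integral_const]
  simp

theorem add_sum_integral_max_sub_zero_of_nonpos [IsProbabilityMeasure μ] (X : ι → Ω → ℝ)
    (hX : ∀ i, Integrable (X i) μ) (hX0 : ∀ i, 0 ≤ᵐ[μ] X i) (s : Finset ι) {r : ℝ}
    (hr : r ≤ 0) :
    r + ∑ i ∈ s, ∫ ω, max (X i ω - r) 0 ∂μ = (1 - #s) * r + ∑ i ∈ s, ∫ ω, X i ω ∂μ := by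
  rw [sum_congr rfl fun i _ => integral_max_sub_zero_of_nonpos (hX i) (hX0 i) hr,
    sum_sub_distrib, sum_const, nsmul_eq_mul]
  ring

theorem le_add_sum_integral_max_sub_zero (X : ι → Ω → ℝ) (s : Finset ι) (r : ℝ) :
    r ≤ r + ∑ i ∈ s, ∫ ω, max (X i ω - r) 0 ∂μ :=
  le_add_of_nonneg_right <| sum_nonneg fun _ _ => integral_nonneg fun _ => le_max_right _ _

end PositivePart

theorem no_negative_minimizer
    {Ω : Type*} [MeasurableSpace Ω] (μ : Measure Ω) [IsProbabilityMeasure μ]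
    {n k : ℕ} (X : Fin n → Ω → ℝ)
    (hX : ∀ i, Integrable (X i) μ) (hX0 : ∀ i ω, 0 ≤ X i ω)
    (hk : 1 ≤ k) (hkn : k ≤ n)
    (Hmax : ℝ → ℝ)
    (hHmax : ∀ r, Hmax r =
      ((Finset.univ : Finset (Fin n)).powersetCard k).sup'
        (Finset.powersetCard_nonempty.2 (by simpa using hkn))
        (fun S => r + ∑ i ∈ S, ∫ ω, max (X i ω - r) 0 ∂μ)) :
    (∀ ρ < (0 : ℝ), Hmax 0 < max (-ρ) 0 + Hmax ρ) ∧
      (⨅ ρ : ℝ, (max (-ρ) 0 + Hmax ρ)) = ⨅ ρ : ℝ, Hmax ρ := by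
  have hX0ae : ∀ i, 0 ≤ᵐ[μ] X i := fun i => Filter.Eventually.of_forall (hX0 i)
  have hHmax_nonpos : ∀ r ≤ (0 : ℝ), Hmax r = (1 - k) * r + Hmax 0 := by
    intro r hr
    simp only [hHmax, add_sup']
    refine sup'_congr _ rfl fun S hS => ?_
    rw [add_sum_integral_max_sub_zero_of_nonpos X hX hX0ae S hr,
      add_sum_integral_max_sub_zero_of_nonpos X hX hX0ae S le_rfl, (mem_powersetCard.1 hS).2]
    ring
  have hk' : (1 : ℝ) ≤ k := by exact_mod_cast hk
  have hle_Hmax : ∀ r, r ≤ Hmax r := fun r => by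
    obtain ⟨S, hS⟩ := powersetCard_nonempty.2 (by simpa using hkn : k ≤ #(univ : Finset (Fin n)))
    rw [hHmax]
    exact (le_add_sum_integral_max_sub_zero (μ := μ) X S r).trans
      (le_sup' (fun S => r + ∑ i ∈ S, ∫ ω, max (X i ω - r) 0 ∂μ) hS)
  refine ⟨fun ρ hρ => ?_, ciInf_max_neg_zero_add_eq (fun ρ hρ => ?_) ⟨0, ?_⟩⟩
  · rw [hHmax_nonpos ρ hρ.le, max_eq_left (by linarith)]
    nlinarith
  · rw [hHmax_nonpos ρ hρ.le]
    nlinarith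
  · rintro _ ⟨ρ, hρ, rfl⟩
    exact le_trans hρ (hle_Hmax ρ)
end

section
/- Let r* be a minimizer of the convex function H_max(r) = max_{S∈K} H(r,S) over ℝ, where K is a finite family and each H(·,S) is convex and continuous. If S⁺ ∈ K is ∞-right-identifiable at r* (for every ε > 0 there exists r ∈ (r*, r*+ε) with H(r,S⁺) = H_max(r)), then H(r*, S⁺) = H_max(r*) and H(r*, S⁺) = min_{r ≥ r*} H(r, S⁺). -/
theorem right_identifiable_min
    {ι : Type*} [Fintype ι] [Nonempty ι]
    (H : ι → ℝ → ℝ) (hconv : ∀ S, ConvexOn ℝ Set.univ (H S))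
    (Hmax : ℝ → ℝ)
    (hHmax : ∀ r, Hmax r =
      (Finset.univ : Finset ι).sup' Finset.univ_nonempty (fun S => H S r))
    (rstar : ℝ) (hmin : ∀ r : ℝ, Hmax rstar ≤ Hmax r)
    (Sp : ι)
    (hid : ∀ ε > (0 : ℝ), ∃ r ∈ Set.Ioo rstar (rstar + ε), H Sp r = Hmax r) :
    H Sp rstar = Hmax rstar ∧ ∀ r ≥ rstar, H Sp rstar ≤ H Sp r := by
  have hle : ∀ r, H Sp r ≤ Hmax r := fun r => by
    rw [hHmax]; exact Finset.le_sup' (fun S => H S r) (Finset.mem_univ Sp)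
  have hcont : Continuous (H Sp) := by
    have := (hconv Sp).continuousOn isOpen_univ
    exact continuousOn_univ.mp this
  have h1 : H Sp rstar = Hmax rstar := by
    refine le_antisymm (hle rstar) ?_
    choose t ht hts using fun n : ℕ => hid (1 / (n + 1)) (by positivity)
    have hub : Filter.Tendsto (fun n : ℕ => rstar + 1 / (n + 1 : ℝ)) Filter.atTop
        (nhds rstar) := by
      have h0 : Filter.Tendsto (fun n : ℕ => 1 / (n + 1 : ℝ)) Filter.atTop
          (nhds 0) := tendsto_one_div_add_atTop_nhds_zero_nat
      have := (tendsto_const_nhds (x := rstar) (f := (Filter.atTop : Filter ℕ))).add h0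
      simpa using this
    have htend : Filter.Tendsto t Filter.atTop (nhds rstar) := by
      refine tendsto_of_tendsto_of_tendsto_of_le_of_le tendsto_const_nhds hub
        (fun n => (ht n).1.le) (fun n => (ht n).2.le)
    have h2 : Filter.Tendsto (fun n => H Sp (t n)) Filter.atTop
        (nhds (H Sp rstar)) := (hcont.tendsto rstar).comp htend
    refine ge_of_tendsto h2 (Filter.Eventually.of_forall fun n => ?_)
    rw [hts n]; exact hmin (t n)
  refine ⟨h1, fun r hr => ?_⟩
  rcases eq_or_lt_of_le hr with h | h
  · rw [← h]
  · obtain ⟨u, hu, huS⟩ := hid (r - rstar) (by linarith)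
    obtain ⟨hu1, hu2⟩ := hu
    have hu2' : u < r := by linarith [hu2]
    set l : ℝ := (u - rstar) / (r - rstar) with hl
    have hl0 : 0 < l := div_pos (by linarith) (by linarith)
    have hl1 : l < 1 := (div_lt_one (by linarith)).2 (by linarith)
    have hlu : l * (r - rstar) = u - rstar := div_mul_cancel₀ _ (by linarith)
    have hcomb : (1 - l) • rstar + l • r = u := by
      simp only [smul_eq_mul]
      linear_combination hlu
    have hconvx := (hconv Sp).2 (Set.mem_univ rstar) (Set.mem_univ r)
      (by linarith : (0:ℝ) ≤ 1 - l) hl0.le (by ring)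
    rw [hcomb] at hconvx
    have hMu : Hmax rstar ≤ Hmax u := hmin u
    rw [← huS, ← h1] at hMu
    have : l * H Sp rstar ≤ l * H Sp r := by
      simp only [smul_eq_mul] at hconvx
      nlinarith
    exact le_of_mul_le_mul_left this hl0
end

section
/- Let f_1,...,f_m : ℝ → ℝ be convex functions and F = max_i f_i their pointwise maximum with minimizer r*. Then there exists an index i such that f_i(r*) = F(r*) and f_i(r) ≥ f_i(r*) for all r ≥ r*, and there exists an index j such that f_j(r*) = F(r*) and f_j(r) ≥ f_j(r*) for all r ≤ r*. -/
/-!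
Suppose every index active at the minimizer `x` of `F = max_i f_i` strictly decreases somewhere
to the right of `x`. By convexity it is then below its value at `x` on a whole interval to the
right of `x`, while the inactive indices stay below `F x` near `x` by continuity. Finitely many
indices make `F t < F x` for some `t > x`. The left half follows by reflecting `r ↦ -r`.
-/

open Set Filter Topology

theorem ConvexOn.lt_left_of_right_lt_left {𝕜 E β : Type*} [Field 𝕜] [LinearOrder 𝕜]
    [IsStrictOrderedRing 𝕜] [AddCommGroup E] [AddCommGroup β] [LinearOrder β]
    [IsOrderedCancelAddMonoid β] [Module 𝕜 E] [Module 𝕜 β] [PosSMulStrictMono 𝕜 β]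
    {s : Set E} {f : E → β} (hf : ConvexOn 𝕜 s f) {x y z : E} (hx : x ∈ s) (hy : y ∈ s)
    (hz : z ∈ openSegment 𝕜 x y) (hyx : f y < f x) : f z < f x := by
  rcases le_or_gt (f z) (f y) with hzy | hyz
  · exact hzy.trans_lt hyx
  · exact hf.lt_left_of_right_lt hx hy hz hyz

theorem ConvexOn.comp_neg {𝕜 E β : Type*} [Field 𝕜] [LinearOrder 𝕜] [IsStrictOrderedRing 𝕜]
    [AddCommGroup E] [AddCommMonoid β] [PartialOrder β] [Module 𝕜 E] [SMul 𝕜 β]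
    {f : E → β} (hf : ConvexOn 𝕜 univ f) : ConvexOn 𝕜 univ (fun x ↦ f (-x)) := by
  exact hf.comp_linearMap (-LinearMap.id)

theorem exists_eq_sup'_isMinOn_Ici {ι : Type*} {s : Finset ι} (hs : s.Nonempty)
    {f : ι → ℝ → ℝ} (hf : ∀ i ∈ s, ConvexOn ℝ univ (f i)) {x : ℝ}
    (hmin : IsMinOn (fun r ↦ s.sup' hs (f · r)) (Ici x) x) :
    ∃ i ∈ s, f i x = s.sup' hs (f · x) ∧ IsMinOn (f i) (Ici x) x := by
  by_contra! h
  have below : ∀ i ∈ s, ∀ᶠ t in 𝓝[>] x, f i t < s.sup' hs (f · x) := by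
    intro i hi
    rcases (s.le_sup' (f · x) hi).lt_or_eq with hlt | heq
    · have hcont : Continuous (f i) := continuousOn_univ.mp ((hf i hi).continuousOn isOpen_univ)
      exact nhdsWithin_le_nhds (hcont.continuousAt.eventually_lt continuousAt_const hlt)
    · obtain ⟨y, hxy, hfy⟩ : ∃ y ≥ x, f i y < f i x := by
        simpa [isMinOn_iff] using h i hi heq
      have hxy : x < y := hxy.lt_of_ne (by rintro rfl; exact hfy.false)
      filter_upwards [Ioo_mem_nhdsGT hxy] with t ht
      rw [← heq]
      exact (hf i hi).lt_left_of_right_lt_left trivial trivial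
        (by rwa [openSegment_eq_Ioo hxy]) hfy
  obtain ⟨t, hft, hxt⟩ := (((eventually_all_finset s).2 below).and self_mem_nhdsWithin).exists
  exact (isMinOn_iff.mp hmin t (mem_Ici.2 (le_of_lt hxt))).not_gt ((s.sup'_lt_iff hs).2 hft)

theorem exists_eq_sup'_isMinOn_Iic {ι : Type*} {s : Finset ι} (hs : s.Nonempty)
    {f : ι → ℝ → ℝ} (hf : ∀ i ∈ s, ConvexOn ℝ univ (f i)) {x : ℝ}
    (hmin : IsMinOn (fun r ↦ s.sup' hs (f · r)) (Iic x) x) :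
    ∃ i ∈ s, f i x = s.sup' hs (f · x) ∧ IsMinOn (f i) (Iic x) x := by
  have hmin' : IsMinOn (fun r ↦ s.sup' hs (f · (-r))) (Ici (-x)) (-x) := by
    intro r hr
    simpa using hmin (show -r ∈ Iic x by simpa [neg_le] using hr)
  obtain ⟨i, hi, hmax, hmin_i⟩ :=
    exists_eq_sup'_isMinOn_Ici hs (fun i hi ↦ (hf i hi).comp_neg) hmin'
  refine ⟨i, hi, by simpa using hmax, fun r hr ↦ ?_⟩
  simpa using hmin_i (show -r ∈ Ici (-x) by simpa using hr)

theorem exists_identifiable_indices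
    {m : ℕ} (hm : 0 < m)
    (f : Fin m → ℝ → ℝ) (hconv : ∀ i, ConvexOn ℝ Set.univ (f i))
    (F : ℝ → ℝ)
    (hF : ∀ r, F r =
      (Finset.univ : Finset (Fin m)).sup'
        (Finset.univ_nonempty_iff.2 ⟨⟨0, hm⟩⟩) (fun i => f i r))
    (rstar : ℝ) (hmin : ∀ r : ℝ, F rstar ≤ F r) :
    (∃ i, f i rstar = F rstar ∧ ∀ r ≥ rstar, f i rstar ≤ f i r) ∧
      (∃ j, f j rstar = F rstar ∧ ∀ r ≤ rstar, f j rstar ≤ f j r) := by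
  obtain rfl : F = fun r ↦ _ := funext hF
  have hconv' : ∀ i ∈ Finset.univ, ConvexOn ℝ univ (f i) := fun i _ ↦ hconv i
  obtain ⟨i, -, hi, hright⟩ := exists_eq_sup'_isMinOn_Ici _ hconv' fun r _ ↦ hmin r
  obtain ⟨j, -, hj, hleft⟩ := exists_eq_sup'_isMinOn_Iic _ hconv' fun r _ ↦ hmin r
  exact ⟨⟨i, hi, fun r hr ↦ hright hr⟩, ⟨j, hj, fun r hr ↦ hleft hr⟩⟩
end

section
/- Samuel-Cahn prophet inequality with the root threshold: Let X_1,...,X_n be mutually independent non-negative integrable random variables and let ρ be the unique real satisfying ∑_{i=1}^n E[(X_i − ρ)^+] = ρ. Consider the stopping rule that inspects X_1,...,X_n in order and stops at the first index i with X_i ≥ ρ (receiving 0 if no such index exists). Then the expected reward of this rule is at least ρ. -/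
/-! Let `T` be the first index with `X T ≥ ρ`. Pointwise, the reward `X_T` equals
`ρ · 1{T exists} + ∑ᵢ 1{T ≥ i} · (Xᵢ - ρ)⁺`: the summands with `i < T` vanish because `Xᵢ < ρ`, and
those with `i > T` because `T ≥ i` fails. The event `{T ≥ i}` is determined by `X_j`, `j < i`, so it
is independent of `Xᵢ` and the `i`-th summand has expectation
`P(T ≥ i) · E(Xᵢ - ρ)⁺ ≥ P(T = ∞) · E(Xᵢ - ρ)⁺`. Summing and using `∑ᵢ E(Xᵢ - ρ)⁺ = ρ`,
the expected reward is at least `ρ (1 - P(T = ∞)) + ρ P(T = ∞) = ρ`. -/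

open MeasureTheory ProbabilityTheory Finset

section Deterministic

variable {ι : Type*} [Fintype ι] [LinearOrder ι]

noncomputable def thresholdReward (ρ : ℝ) (x : ι → ℝ) : ℝ :=
  if h : (univ.filter fun i => ρ ≤ x i).Nonempty then x ((univ.filter fun i => ρ ≤ x i).min' h)
  else 0

theorem thresholdReward_eq_add_sum (ρ : ℝ) (x : ι → ℝ) :
    thresholdReward ρ x = (if ∀ i, x i < ρ then 0 else ρ) +
      ∑ i, if ∀ j < i, x j < ρ then max (x i - ρ) 0 else 0 := by
  unfold thresholdReward
  by_cases h : (univ.filter fun i => ρ ≤ x i).Nonempty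
  · set m := (univ.filter fun i => ρ ≤ x i).min' h
    have hm : ρ ≤ x m := (mem_filter.1 (min'_mem _ h)).2
    have hbefore : ∀ j < m, x j < ρ := fun j hj =>
      not_le.1 fun hj' => not_le.2 hj (min'_le _ j (mem_filter.2 ⟨mem_univ j, hj'⟩))
    rw [dif_pos h, if_neg fun hall => not_lt.2 hm (hall m), sum_eq_single m, if_pos hbefore,
      max_eq_left (sub_nonneg.2 hm)]
    · ring
    · intro i _ him
      rcases lt_or_gt_of_ne him with hi | hi
      · rw [if_pos fun j hj => hbefore j (hj.trans hi), max_eq_right (by linarith [hbefore i hi])]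
      · exact if_neg fun hbefore' => not_lt.2 hm (hbefore' m hi)
    · exact fun h => absurd (mem_univ m) h
  · have hall : ∀ i, x i < ρ := fun i => not_le.1 fun hi => h ⟨i, mem_filter.2 ⟨mem_univ i, hi⟩⟩
    rw [dif_neg h, if_pos hall, sum_eq_zero fun i _ => ?_, add_zero]
    exact ite_eq_right_iff.2 fun _ => max_eq_right (by linarith [hall i])

end Deterministic

section Probability

variable {Ω ι : Type*} [MeasurableSpace Ω] {μ : Measure Ω} [Fintype ι] [LinearOrder ι]
  {X : ι → Ω → ℝ} {ρ : ℝ}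

def notStoppedBefore (X : ι → Ω → ℝ) (ρ : ℝ) (i : ι) : Set Ω := {ω | ∀ j < i, X j ω < ρ}

theorem nullMeasurableSet_setOf_forall_lt (hX : ∀ i, AEMeasurable (X i) μ) (s : Set ι) :
    NullMeasurableSet {ω | ∀ j ∈ s, X j ω < ρ} μ := by
  simp only [Set.ofPred_forall]
  exact .iInter fun j => .iInter fun _ => (hX j).nullMeasurableSet_preimage measurableSet_Iio

theorem nullMeasurableSet_notStoppedBefore (hX : ∀ i, AEMeasurable (X i) μ) (i : ι) :
    NullMeasurableSet (notStoppedBefore X ρ i) μ :=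
  nullMeasurableSet_setOf_forall_lt hX (Set.Iio i)

theorem integral_indicator_notStoppedBefore
    (hX : ∀ i, AEMeasurable (X i) μ) (hindep : iIndepFun X μ) (i : ι) :
    ∫ ω, (notStoppedBefore X ρ i).indicator (fun ω => max (X i ω - ρ) 0) ω ∂μ =
      μ.real (notStoppedBefore X ρ i) * ∫ ω, max (X i ω - ρ) 0 ∂μ := by
  set past := univ.filter (· < i)
  have hpast_meas : AEMeasurable (fun ω (j : past) => X j ω) μ :=
    aemeasurable_pi_lambda _ fun j => hX j
  set below : Set (past → ℝ) := {y | ∀ j, y j < ρ}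
  have hbelow : MeasurableSet below := by
    simp only [below, Set.ofPred_forall]
    exact MeasurableSet.iInter fun j => measurableSet_lt (measurable_pi_apply j) measurable_const
  have hpreimage : (fun ω (j : past) => X j ω) ⁻¹' below = notStoppedBefore X ρ i := by
    ext ω
    simp [below, notStoppedBefore, past]
  have hfactor := (hindep.indepFun_finset₀ past {i} (by simp [past]) hX).integral_fun_comp_mul_comp
    (f := below.indicator 1) (g := fun y => max (y ⟨i, mem_singleton_self i⟩ - ρ) 0)
    hpast_meas (aemeasurable_pi_lambda _ fun j => hX j)
    (measurable_const.indicator hbelow).aestronglyMeasurable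
    (((measurable_pi_apply _).sub measurable_const).max measurable_const).aestronglyMeasurable
  have hindicator (ω : Ω) : below.indicator (1 : (past → ℝ) → ℝ) (fun j : past => X j ω) =
      (notStoppedBefore X ρ i).indicator 1 ω := by
    rw [← hpreimage]
    rfl
  have hmul (ω : Ω) : (notStoppedBefore X ρ i).indicator (fun ω => max (X i ω - ρ) 0) ω =
      (notStoppedBefore X ρ i).indicator 1 ω * max (X i ω - ρ) 0 := by
    by_cases hω : ω ∈ notStoppedBefore X ρ i <;> simp [hω]
  simp only [hindicator] at hfactor
  rw [integral_congr_ae (.of_forall hmul), hfactor,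
    integral_indicator₀ (nullMeasurableSet_notStoppedBefore hX i)]
  simp only [Pi.one_apply, setIntegral_const, smul_eq_mul, mul_one]

theorem integral_thresholdReward [IsProbabilityMeasure μ] (hX : ∀ i, Integrable (X i) μ)
    (hindep : iIndepFun X μ) :
    ∫ ω, thresholdReward ρ (fun i => X i ω) ∂μ =
      ρ * (1 - μ.real {ω | ∀ i, X i ω < ρ}) +
        ∑ i, μ.real (notStoppedBefore X ρ i) * ∫ ω, max (X i ω - ρ) 0 ∂μ := by
  have hXm (i : ι) : AEMeasurable (X i) μ := (hX i).aemeasurable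
  have hnever : NullMeasurableSet {ω | ∀ i, X i ω < ρ} μ := by
    simpa using nullMeasurableSet_setOf_forall_lt hXm Set.univ
  have hnotStopped := nullMeasurableSet_notStoppedBefore (ρ := ρ) hXm
  have hgain (i : ι) : Integrable (fun ω => max (X i ω - ρ) 0) μ :=
    ((hX i).sub (integrable_const ρ)).pos_part
  have hsplit : (fun ω => thresholdReward ρ (fun i => X i ω)) = fun ω =>
      {ω | ∀ i, X i ω < ρ}ᶜ.indicator (fun _ => ρ) ω +
        ∑ i, (notStoppedBefore X ρ i).indicator (fun ω => max (X i ω - ρ) 0) ω := by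
    funext ω
    simp only [thresholdReward_eq_add_sum, Set.indicator_apply, Set.mem_compl_iff, Set.mem_ofPred_eq,
      ite_not, notStoppedBefore]
  rw [hsplit, integral_add ((integrable_const ρ).indicator₀ hnever.compl)
      (integrable_finsetSum _ fun i _ => (hgain i).indicator₀ (hnotStopped i)),
    integral_finsetSum _ fun i _ => (hgain i).indicator₀ (hnotStopped i),
    integral_indicator₀ hnever.compl, setIntegral_const, probReal_compl_eq_one_sub₀ hnever,
    smul_eq_mul, mul_comm]
  exact congrArg _ (sum_congr rfl fun i _ => integral_indicator_notStoppedBefore hXm hindep i)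

end Probability

theorem samuel_cahn_root_threshold_general
    {Ω : Type*} [MeasurableSpace Ω] (μ : Measure Ω) [IsProbabilityMeasure μ]
    {n : ℕ} (X : Fin n → Ω → ℝ)
    (hX : ∀ i, Integrable (X i) μ)
    (hindep : ProbabilityTheory.iIndepFun X μ)
    (ρ : ℝ)
    (hρ : ∑ i, ∫ ω, max (X i ω - ρ) 0 ∂μ = ρ) :
    ρ ≤ ∫ ω,
        (if h : (Finset.univ.filter (fun i => ρ ≤ X i ω)).Nonempty then
          X ((Finset.univ.filter (fun i => ρ ≤ X i ω)).min' h) ω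
        else 0) ∂μ := by
  change ρ ≤ ∫ ω, thresholdReward ρ (fun i => X i ω) ∂μ
  rw [integral_thresholdReward hX hindep]
  set pNever := μ.real {ω | ∀ i, X i ω < ρ}
  have hmono (i : Fin n) : pNever ≤ μ.real (notStoppedBefore X ρ i) :=
    measureReal_mono fun ω hω j _ => hω j
  calc ρ = ρ * (1 - pNever) + ∑ i, pNever * ∫ ω, max (X i ω - ρ) 0 ∂μ := by
        rw [← mul_sum, hρ]; ring
    _ ≤ _ := by
        gcongr with i
        exact hmono i

theorem samuel_cahn_root_threshold
    {Ω : Type*} [MeasurableSpace Ω] (μ : Measure Ω) [IsProbabilityMeasure μ]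
    {n : ℕ} (X : Fin n → Ω → ℝ)
    (hX : ∀ i, Integrable (X i) μ) (hX0 : ∀ i ω, 0 ≤ X i ω)
    (hindep : ProbabilityTheory.iIndepFun X μ)
    (ρ : ℝ) (hρpos : 0 < ρ)
    (hρ : ∑ i, ∫ ω, max (X i ω - ρ) 0 ∂μ = ρ) :
    ρ ≤ ∫ ω,
        (if h : (Finset.univ.filter (fun i => ρ ≤ X i ω)).Nonempty then
          X ((Finset.univ.filter (fun i => ρ ≤ X i ω)).min' h) ω
        else 0) ∂μ :=
  samuel_cahn_root_threshold_general μ X hX hindep ρ hρ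
end

section
/- If X_1,...,X_n are mutually independent non-negative integrable random variables and ρ(S) is the unique root of ∑_{i∈S} E[(X_i − r)^+] = r for a k-subset S, then E[max_{i∈S} X_i] ≥ ρ(S). -/
/-!
Threshold at `ρ`. Pointwise,
`∑ i, (X i - ρ)⁺ · 1[X j < ρ for all j ≠ i] + ρ ≤ max X + ρ · 1[X j < ρ for all j]`,
because at most one summand on the left is nonzero. By independence the `i`-th summand has
expectation `E (X i - ρ)⁺ · P(X j < ρ, j ≠ i) ≥ E (X i - ρ)⁺ · P(X j < ρ for all j)`, so by the
fixed-point equation the sum has expectation at least `ρ · P(X j < ρ for all j)`, which cancels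
the last term.
-/

open MeasureTheory ProbabilityTheory

theorem Finset.sum_indicator_posPart_sub_le {ι : Type*} [DecidableEq ι] (S : Finset ι)
    (hS : S.Nonempty) (x : ι → ℝ) (ρ : ℝ) :
    ∑ i ∈ S, (Set.pi ↑(S.erase i) fun _ => Set.Iio ρ).indicator (fun y => max (y i - ρ) 0) x
      ≤ max (S.sup' hS x - ρ) 0 := by
  -- a nonzero summand `i` has `ρ < x i`, which kills every other summand
  by_cases hone : ∃ i ∈ S, ρ < x i ∧ x ∈ Set.pi ↑(S.erase i) fun _ => Set.Iio ρ
  · obtain ⟨i, hi, hρi, hxi⟩ := hone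
    have hothers : ∀ j ∈ S, j ≠ i →
        (Set.pi ↑(S.erase j) fun _ => Set.Iio ρ).indicator (fun y => max (y j - ρ) 0) x = 0 :=
      fun j _ hji => Set.indicator_of_notMem
        (fun h => (h i (Finset.mem_erase.2 ⟨hji.symm, hi⟩)).not_gt hρi) _
    rw [Finset.sum_eq_single_of_mem i hi hothers, Set.indicator_of_mem hxi]
    exact max_le_max_right 0 (sub_le_sub_right (S.le_sup' x hi) ρ)
  · push Not at hone
    refine (Finset.sum_eq_zero fun i hi => ?_).trans_le (le_max_right _ _)
    by_cases hxi : x ∈ Set.pi ↑(S.erase i) fun _ => Set.Iio ρ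
    · rw [Set.indicator_of_mem hxi, max_eq_right (sub_nonpos.2 (not_lt.1 fun h => hone i hi h hxi))]
    · exact Set.indicator_of_notMem hxi _

theorem Finset.sum_indicator_posPart_sub_add_le {ι : Type*} [DecidableEq ι] (S : Finset ι)
    (hS : S.Nonempty) (x : ι → ℝ) (hx : 0 ≤ S.sup' hS x) (ρ : ℝ) :
    ∑ i ∈ S, (Set.pi ↑(S.erase i) fun _ => Set.Iio ρ).indicator (fun y => max (y i - ρ) 0) x + ρ
      ≤ S.sup' hS x + (Set.pi ↑S fun _ => Set.Iio ρ).indicator (fun _ => ρ) x := by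
  have hsum := S.sum_indicator_posPart_sub_le hS x ρ
  by_cases hbelow : x ∈ Set.pi ↑S fun _ => Set.Iio ρ
  · have hmax : S.sup' hS x < ρ := (S.sup'_lt_iff hS).2 hbelow
    rw [Set.indicator_of_mem hbelow, max_eq_right (by linarith)] at *
    linarith
  · obtain ⟨j, hj, hρj⟩ : ∃ j ∈ S, ρ ≤ x j := by simpa [Set.mem_pi] using hbelow
    have hmax : ρ ≤ S.sup' hS x := hρj.trans (S.le_sup' x hj)
    rw [Set.indicator_of_notMem hbelow, max_eq_left (by linarith)] at *
    linarith

theorem MeasureTheory.Integrable.finset_sup' {Ω ι : Type*} [MeasurableSpace Ω] {μ : Measure Ω}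
    {S : Finset ι} (hS : S.Nonempty) {f : ι → Ω → ℝ} (hf : ∀ i ∈ S, Integrable (f i) μ) :
    Integrable (fun ω => S.sup' hS fun i => f i ω) μ := by
  convert Finset.sup'_induction (p := fun g => Integrable g μ) hS f
    (fun _ hg _ hh => hg.sup hh) hf using 1
  exact funext fun ω => (Finset.sup'_apply hS f ω).symm

section

variable {Ω ι β : Type*} [MeasurableSpace Ω] {μ : Measure Ω} [MeasurableSpace β]
  {X : ι → Ω → β}

theorem MeasureTheory.nullMeasurableSet_forall_mem (hX : ∀ j, AEMeasurable (X j) μ)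
    (T : Finset ι) {t : ι → Set β} (ht : ∀ j, MeasurableSet (t j)) :
    NullMeasurableSet {ω | ∀ j ∈ T, X j ω ∈ t j} μ := by
  convert NullMeasurableSet.biInter T.countable_toSet fun j _ =>
    (hX j).nullMeasurableSet_preimage (ht j) using 1
  ext ω
  simp

theorem ProbabilityTheory.iIndepFun.setIntegral_forall_mem_eq_mul [DecidableEq ι]
    (h : iIndepFun X μ) (hX : ∀ j, AEMeasurable (X j) μ) {i : ι} {T : Finset ι} (hi : i ∉ T)
    {f : β → ℝ} (hf : AEStronglyMeasurable f (μ.map (X i))) {t : ι → Set β}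
    (ht : ∀ j, MeasurableSet (t j)) :
    ∫ ω in {ω | ∀ j ∈ T, X j ω ∈ t j}, f (X i ω) ∂μ
      = μ.real {ω | ∀ j ∈ T, X j ω ∈ t j} * ∫ ω, f (X i ω) ∂μ := by
  have hind : IndepFun (X i) (fun ω (j : T) => X j ω) μ := by
    have := (h.indepFun_finset₀ {i} T (Finset.disjoint_singleton_left.2 hi) hX).comp
      (measurable_pi_apply ⟨i, Finset.mem_singleton_self i⟩) measurable_id
    exact this
  set V : Ω → T → β := fun ω j => X j ω
  set A : Set (T → β) := Set.univ.pi fun j => t j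
  have hA : MeasurableSet A := MeasurableSet.univ_pi fun j => ht j
  have hV : AEMeasurable V μ := aemeasurable_pi_lambda _ fun j => hX j
  have hE : {ω | ∀ j ∈ T, X j ω ∈ t j} = V ⁻¹' A := by
    ext ω; simp [V, A]
  have hEm : NullMeasurableSet (V ⁻¹' A) μ := hV.nullMeasurableSet_preimage hA
  rw [hE]
  calc ∫ ω in V ⁻¹' A, f (X i ω) ∂μ
      = ∫ ω, f (X i ω) * A.indicator 1 (V ω) ∂μ := by
        rw [← integral_indicator₀ hEm]
        congr 1 with ω
        rw [← Set.indicator_comp_right]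
        simpa using Set.indicator_mul_right (V ⁻¹' A) (fun ω => f (X i ω)) 1 (i := ω)
    _ = (∫ ω, f (X i ω) ∂μ) * ∫ ω, A.indicator 1 (V ω) ∂μ :=
        hind.integral_fun_comp_mul_comp (hX i) hV hf
          (measurable_one.indicator hA).aestronglyMeasurable
    _ = μ.real (V ⁻¹' A) * ∫ ω, f (X i ω) ∂μ := by
        rw [mul_comm, ← mul_one (μ.real _), ← smul_eq_mul (μ.real _), ← setIntegral_const,
          ← integral_indicator₀ hEm]
        rfl

theorem ProbabilityTheory.iIndepFun.measureReal_mul_sum_integral_le [DecidableEq ι]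
    (h : iIndepFun X μ) (hX : ∀ j, AEMeasurable (X j) μ) (S : Finset ι) {f : ι → β → ℝ}
    (hf0 : ∀ i, 0 ≤ f i) (hf : ∀ i, AEStronglyMeasurable (f i) (μ.map (X i)))
    {t : ι → Set β} (ht : ∀ j, MeasurableSet (t j)) :
    μ.real {ω | ∀ j ∈ S, X j ω ∈ t j} * ∑ i ∈ S, ∫ ω, f i (X i ω) ∂μ
      ≤ ∑ i ∈ S, ∫ ω in {ω | ∀ j ∈ S.erase i, X j ω ∈ t j}, f i (X i ω) ∂μ := by
  have := h.isProbabilityMeasure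
  rw [Finset.mul_sum]
  refine Finset.sum_le_sum fun i _ => ?_
  rw [h.setIntegral_forall_mem_eq_mul hX (S.notMem_erase i) (hf i) ht]
  refine mul_le_mul_of_nonneg_right ?_ (integral_nonneg fun ω => hf0 i _)
  exact measureReal_mono fun ω hω j hj => hω j (Finset.mem_of_mem_erase hj)

end

theorem MeasureTheory.sum_setIntegral_posPart_sub_add_le {Ω ι : Type*} [MeasurableSpace Ω]
    {μ : Measure Ω} [IsProbabilityMeasure μ] [DecidableEq ι] {X : ι → Ω → ℝ}
    (hX : ∀ i, Integrable (X i) μ) (S : Finset ι) (hS : S.Nonempty)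
    (h0 : ∀ᵐ ω ∂μ, 0 ≤ S.sup' hS fun i => X i ω) (ρ : ℝ) :
    ∑ i ∈ S, ∫ ω in {ω | ∀ j ∈ S.erase i, X j ω ∈ Set.Iio ρ}, max (X i ω - ρ) 0 ∂μ + ρ
      ≤ ∫ ω, S.sup' hS (fun i => X i ω) ∂μ + μ.real {ω | ∀ j ∈ S, X j ω ∈ Set.Iio ρ} * ρ := by
  have hXm : ∀ i, AEMeasurable (X i) μ := fun i => (hX i).aemeasurable
  have hbelow : ∀ T : Finset ι, NullMeasurableSet {ω | ∀ j ∈ T, X j ω ∈ Set.Iio ρ} μ :=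
    fun T => nullMeasurableSet_forall_mem hXm T fun _ => measurableSet_Iio
  have hpos : ∀ i, Integrable (fun ω => max (X i ω - ρ) 0) μ :=
    fun i => ((hX i).sub (integrable_const ρ)).sup (integrable_const 0)
  have hterm : ∀ i ∈ S, Integrable ({ω | ∀ j ∈ S.erase i, X j ω ∈ Set.Iio ρ}.indicator
      fun ω => max (X i ω - ρ) 0) μ :=
    fun i _ => (hpos i).indicator₀ (hbelow _)
  have hmono := integral_mono_ae ((integrable_finsetSum S hterm).add (integrable_const ρ))
    ((Integrable.finset_sup' hS fun i _ => hX i).add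
      ((integrable_const ρ).indicator₀ (hbelow S)))
    (h0.mono fun ω hω => S.sum_indicator_posPart_sub_add_le hS (fun j => X j ω) hω ρ)
  rw [integral_add' (integrable_finsetSum S hterm) (integrable_const ρ),
    integral_finsetSum S hterm, integral_const, probReal_univ, one_smul,
    integral_add' (Integrable.finset_sup' hS fun i _ => hX i)
      ((integrable_const ρ).indicator₀ (hbelow S)),
    integral_indicator₀ (hbelow S), setIntegral_const, smul_eq_mul] at hmono
  simpa only [integral_indicator₀ (hbelow _)] using hmono

theorem expected_max_ge_root_general
    {Ω : Type*} [MeasurableSpace Ω] (μ : Measure Ω) [IsProbabilityMeasure μ]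
    {n : ℕ} (X : Fin n → Ω → ℝ)
    (hX : ∀ i, Integrable (X i) μ) (hX0 : ∀ i ω, 0 ≤ X i ω)
    (hindep : ProbabilityTheory.iIndepFun X μ)
    (S : Finset (Fin n)) (hS : S.Nonempty)
    (ρ : ℝ) (hρ : ∑ i ∈ S, ∫ ω, max (X i ω - ρ) 0 ∂μ = ρ) :
    ρ ≤ ∫ ω, S.sup' hS (fun i => X i ω) ∂μ := by
  have h0 : ∀ ω, 0 ≤ S.sup' hS fun i => X i ω := fun ω =>
    let ⟨i, hi⟩ := hS; (hX0 i ω).trans (S.le_sup' (fun i => X i ω) hi)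
  have hbound := sum_setIntegral_posPart_sub_add_le hX S hS (ae_of_all μ h0) ρ
  have hlow := hindep.measureReal_mul_sum_integral_le (fun j => (hX j).aemeasurable) S
    (f := fun _ x => max (x - ρ) 0) (fun _ x => le_max_right _ _) (fun _ => by fun_prop)
    (t := fun _ => Set.Iio ρ) fun _ => measurableSet_Iio
  rw [hρ] at hlow
  linarith

theorem expected_max_ge_root
    {Ω : Type*} [MeasurableSpace Ω] (μ : Measure Ω) [IsProbabilityMeasure μ]
    {n k : ℕ} (X : Fin n → Ω → ℝ)
    (hX : ∀ i, Integrable (X i) μ) (hX0 : ∀ i ω, 0 ≤ X i ω)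
    (hindep : ProbabilityTheory.iIndepFun X μ)
    (S : Finset (Fin n)) (hS : S.Nonempty) (hcard : S.card = k)
    (ρ : ℝ) (hρ : ∑ i ∈ S, ∫ ω, max (X i ω - ρ) 0 ∂μ = ρ) :
    ρ ≤ ∫ ω, S.sup' hS (fun i => X i ω) ∂μ :=
  expected_max_ge_root_general μ X hX hX0 hindep S hS ρ hρ
end
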